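/- arXiv:2003.01086 — 2 statements merged into one kernel-verified Lean document; each statement's English description precedes it below -/
import Mathlib

section
/- Let X, Y, A, B be nonempty finite types, let p be a strictly positive probability mass function on X × Y, and let e : X → A and f : Y → B. Then the infimum, over all restricted prediction models q_ψ, of the predictive loss ℓ(q_ψ) = Σ_x p_X(x) · KL(p(·|x) ‖ q_ψ(·|x)) is at most the mutual information gap I(X;Y) − I(e(X); f(Y)). In particular, there exists a restricted prediction model whose predictive loss equals I(X;Y) − I(e(X); f(Y)). -/
/-!
Statement 0: For a strictly positive pmf `p` on `X × Y` and maps `e : X → A`,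
`f : Y → B`, the infimum over restricted prediction models
`q_ψ(y|x) ∝ ψ1(y)·ψ2(e x, f y)` of the predictive loss
`∑_x p_X(x) · KL(p(·|x) ‖ q_ψ(·|x))` is at most the mutual information gap
`I(X;Y) − I(e(X); f(Y))`, and some restricted model attains exactly the gap.
-/

open Finset
open scoped Classical

noncomputable section

variable {X Y A B : Type*} [Fintype X] [Fintype Y] [Fintype A] [Fintype B]

/-- Marginal of the first coordinate. -/
def margX (p : X × Y → ℝ) (x : X) : ℝ := ∑ y, p (x, y)

/-- Marginal of the second coordinate. -/
def margY (p : X × Y → ℝ) (y : Y) : ℝ := ∑ x, p (x, y)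

/-- Conditional pmf of `y` given `x`. -/
def condYX (p : X × Y → ℝ) (y : Y) (x : X) : ℝ := p (x, y) / margX p x

/-- Mutual information between the two coordinates of a pmf on a product of
finite types (terms with zero mass contribute `0`, since `Real.log 0 = 0`). -/
def mutualInfo (p : X × Y → ℝ) : ℝ :=
  ∑ x, ∑ y, p (x, y) * Real.log (p (x, y) / (margX p x * margY p y))

/-- Pushforward pmf of `p` under `(x, y) ↦ (e x, f y)`. -/
def pushPmf (p : X × Y → ℝ) (e : X → A) (f : Y → B) : A × B → ℝ :=
  fun ab => ∑ x, ∑ y, if e x = ab.1 ∧ f y = ab.2 then p (x, y) else 0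

/-- KL divergence between two pmfs on a finite type. -/
def klPmf (f g : Y → ℝ) : ℝ := ∑ y, f y * Real.log (f y / g y)

/-- The restricted prediction model `q_ψ(y|x)` induced by `ψ1, ψ2`. -/
def qModel (e : X → A) (f : Y → B) (ψ1 : Y → ℝ) (ψ2 : A × B → ℝ) (y : Y) (x : X) : ℝ :=
  ψ1 y * ψ2 (e x, f y) / ∑ y', ψ1 y' * ψ2 (e x, f y')

/-- Predictive loss of a conditional model `q y x = q(y|x)` under `p`. -/
def predLoss (p : X × Y → ℝ) (q : Y → X → ℝ) : ℝ :=
  ∑ x, margX p x * klPmf (fun y => condYX p y x) (fun y => q y x)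

/-!
With `ψ1 = p_Y` and `ψ2 = P / (P_A ⊗ P_B)`, where `P` is the pushforward of `p` under `e × f`,
the normalizer of `q_ψ(·|x)` is `∑_b P(e x, b) / P_A(e x) = 1` (group `y` by the fibres of `f`).
The loss of this model then splits as `I(X;Y) − E_p log ψ2(e X, f Y)`, and the second term is
`I(e(X); f(Y))`. The infimum is finite because every restricted model has `q_ψ ≤ 1`, which
bounds every loss below by `−H(Y|X)`.
-/

section Marginals

variable {p : X × Y → ℝ}

omit [Fintype X] in
lemma le_margX (hp : ∀ xy, 0 ≤ p xy) (x : X) (y : Y) : p (x, y) ≤ margX p x :=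
  single_le_sum (f := fun y' => p (x, y')) (fun y' _ => hp (x, y')) (mem_univ y)

omit [Fintype Y] in
lemma le_margY (hp : ∀ xy, 0 ≤ p xy) (x : X) (y : Y) : p (x, y) ≤ margY p y :=
  single_le_sum (f := fun x' => p (x', y)) (fun x' _ => hp (x', y)) (mem_univ x)

omit [Fintype X] in
lemma margX_nonneg (hp : ∀ xy, 0 ≤ p xy) (x : X) : 0 ≤ margX p x :=
  sum_nonneg fun y _ => hp (x, y)

omit [Fintype Y] in
lemma margY_nonneg (hp : ∀ xy, 0 ≤ p xy) (y : Y) : 0 ≤ margY p y :=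
  sum_nonneg fun x _ => hp (x, y)

omit [Fintype X] in
lemma condYX_pos (hpos : ∀ xy, 0 < p xy) (y : Y) (x : X) : 0 < condYX p y x :=
  div_pos (hpos _) ((hpos _).trans_le (le_margX (fun xy => (hpos xy).le) x y))

omit [Fintype X] in
lemma condYX_le_one (hpos : ∀ xy, 0 < p xy) (y : Y) (x : X) : condYX p y x ≤ 1 :=
  div_le_one_of_le₀ (le_margX (fun xy => (hpos xy).le) x y)
    (margX_nonneg (fun xy => (hpos xy).le) x)

end Marginals

omit [Fintype A] [Fintype B] in
lemma pushPmf_nonneg {p : X × Y → ℝ} (hp : ∀ xy, 0 ≤ p xy) (e : X → A) (f : Y → B)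
    (ab : A × B) : 0 ≤ pushPmf p e f ab :=
  sum_nonneg fun _ _ => sum_nonneg fun _ _ => by split_ifs <;> simp [hp]

omit [Fintype A] [Fintype B] in
lemma le_pushPmf {p : X × Y → ℝ} (hp : ∀ xy, 0 ≤ p xy) (e : X → A) (f : Y → B)
    (x : X) (y : Y) :
    p (x, y) ≤ pushPmf p e f (e x, f y) := by
  have hinner : p (x, y) ≤ ∑ y', if e x = e x ∧ f y' = f y then p (x, y') else 0 := by
    simpa using single_le_sum (f := fun y' => if e x = e x ∧ f y' = f y then p (x, y') else 0)
      (fun y' _ => by split_ifs <;> simp [hp]) (mem_univ y)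
  exact hinner.trans <| single_le_sum
    (f := fun x' => ∑ y', if e x' = e x ∧ f y' = f y then p (x', y') else 0)
    (fun x' _ => sum_nonneg fun y' _ => by split_ifs <;> simp [hp]) (mem_univ x)

lemma sum_pushPmf_mul (p : X × Y → ℝ) (e : X → A) (f : Y → B) (g : A × B → ℝ) :
    ∑ a, ∑ b, pushPmf p e f (a, b) * g (a, b) = ∑ x, ∑ y, p (x, y) * g (e x, f y) := by
  have hsplit : ∀ x y, p (x, y) * g (e x, f y)
      = ∑ a, ∑ b, if e x = a ∧ f y = b then p (x, y) * g (a, b) else 0 := by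
    intro x y
    simp [ite_and, sum_ite_eq]
  simp only [hsplit, pushPmf, sum_mul, ite_mul, zero_mul]
  conv_lhs => enter [2, a]; rw [sum_comm]
  conv_lhs => rw [sum_comm]
  refine sum_congr rfl fun x _ => ?_
  conv_lhs => enter [2, a]; rw [sum_comm]
  rw [sum_comm]

lemma sum_margY_pushPmf_mul (p : X × Y → ℝ) (e : X → A) (f : Y → B) (g : B → ℝ) :
    ∑ b, margY (pushPmf p e f) b * g b = ∑ y, margY p y * g (f y) := by
  simp only [margY, sum_mul]
  rw [sum_comm, sum_pushPmf_mul p e f (fun ab => g ab.2), sum_comm]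

def dependenceRatio (p : X × Y → ℝ) (xy : X × Y) : ℝ :=
  p xy / (margX p xy.1 * margY p xy.2)

section DependenceRatio

variable {p : X × Y → ℝ}

lemma dependenceRatio_nonneg (hp : ∀ xy, 0 ≤ p xy) (xy : X × Y) : 0 ≤ dependenceRatio p xy :=
  div_nonneg (hp xy) (mul_nonneg (margX_nonneg hp _) (margY_nonneg hp _))

lemma dependenceRatio_pos (hp : ∀ xy, 0 ≤ p xy) {x : X} {y : Y} (hxy : 0 < p (x, y)) :
    0 < dependenceRatio p (x, y) :=
  div_pos hxy (mul_pos (hxy.trans_le (le_margX hp x y)) (hxy.trans_le (le_margY hp x y)))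

lemma margY_mul_dependenceRatio (hp : ∀ xy, 0 ≤ p xy) (x : X) (y : Y) :
    margY p y * dependenceRatio p (x, y) = p (x, y) / margX p x := by
  rcases (margY_nonneg hp y).eq_or_lt with hy | hy
  · have hxy : p (x, y) = 0 := le_antisymm (hy ▸ le_margY hp x y) (hp _)
    simp [← hy, hxy]
  · simp only [dependenceRatio]
    rw [← div_div, mul_div_cancel₀ _ hy.ne']

lemma sum_margY_mul_dependenceRatio (hp : ∀ xy, 0 ≤ p xy) {x : X} (hx : margX p x ≠ 0) :
    ∑ y, margY p y * dependenceRatio p (x, y) = 1 := by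
  simp_rw [margY_mul_dependenceRatio hp, ← sum_div]
  exact div_self hx

end DependenceRatio

lemma predLoss_margY_mul {p : X × Y → ℝ} (hpos : ∀ xy, 0 < p xy) (r : Y → X → ℝ)
    (hr : ∀ y x, 0 < r y x) :
    predLoss p (fun y x => margY p y * r y x)
      = mutualInfo p - ∑ x, ∑ y, p (x, y) * Real.log (r y x) := by
  have hp : ∀ xy, 0 ≤ p xy := fun xy => (hpos xy).le
  have hterm : ∀ x y, margX p x * (condYX p y x * Real.log (condYX p y x / (margY p y * r y x)))
      = p (x, y) * Real.log (p (x, y) / (margX p x * margY p y)) - p (x, y) * Real.log (r y x) := by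
    intro x y
    have hX : 0 < margX p x := (hpos _).trans_le (le_margX hp x y)
    have hY : 0 < margY p y := (hpos _).trans_le (le_margY hp x y)
    rw [condYX, show p (x, y) / margX p x / (margY p y * r y x)
        = p (x, y) / (margX p x * margY p y) / r y x by ring,
      Real.log_div (div_pos (hpos _) (mul_pos hX hY)).ne' (hr y x).ne']
    field_simp
  simp only [predLoss, klPmf, mul_sum, hterm, sum_sub_distrib, mutualInfo]

lemma Real.log_le_log_div {c q : ℝ} (hc₀ : 0 < c) (hc₁ : c ≤ 1) (hq₀ : 0 ≤ q)
    (hq₁ : q ≤ 1) :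
    Real.log c ≤ Real.log (c / q) := by
  rcases hq₀.eq_or_lt with rfl | hq
  · -- `c / 0 = 0` and `Real.log 0 = 0`
    simpa using Real.log_nonpos hc₀.le hc₁
  · exact Real.log_le_log hc₀ (le_div_self hc₀.le hq hq₁)

omit [Fintype X] [Fintype A] [Fintype B] in
lemma qModel_nonneg {e : X → A} {f : Y → B} {ψ1 : Y → ℝ} {ψ2 : A × B → ℝ}
    (hψ1 : ∀ y, 0 ≤ ψ1 y) (hψ2 : ∀ ab, 0 ≤ ψ2 ab) (y : Y) (x : X) :
    0 ≤ qModel e f ψ1 ψ2 y x :=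
  div_nonneg (mul_nonneg (hψ1 y) (hψ2 _))
    (sum_nonneg fun y' _ => mul_nonneg (hψ1 y') (hψ2 _))

omit [Fintype X] [Fintype A] [Fintype B] in
lemma qModel_le_one {e : X → A} {f : Y → B} {ψ1 : Y → ℝ} {ψ2 : A × B → ℝ}
    (hψ1 : ∀ y, 0 ≤ ψ1 y) (hψ2 : ∀ ab, 0 ≤ ψ2 ab) (y : Y) (x : X) :
    qModel e f ψ1 ψ2 y x ≤ 1 :=
  div_le_one_of_le₀ (single_le_sum (f := fun y' => ψ1 y' * ψ2 (e x, f y'))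
    (fun y' _ => mul_nonneg (hψ1 y') (hψ2 _)) (mem_univ y))
    (sum_nonneg fun y' _ => mul_nonneg (hψ1 y') (hψ2 _))

lemma sum_mul_log_condYX_le_predLoss {p : X × Y → ℝ} (hpos : ∀ xy, 0 < p xy)
    (q : Y → X → ℝ) (hq₀ : ∀ y x, 0 ≤ q y x) (hq₁ : ∀ y x, q y x ≤ 1) :
    ∑ x, ∑ y, p (x, y) * Real.log (condYX p y x) ≤ predLoss p q := by
  simp only [predLoss, klPmf, mul_sum]
  refine sum_le_sum fun x _ => sum_le_sum fun y _ => ?_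
  have hX : 0 < margX p x := (hpos _).trans_le (le_margX (fun xy => (hpos xy).le) x y)
  have hc := condYX_pos hpos y x
  calc p (x, y) * Real.log (condYX p y x)
      = margX p x * (condYX p y x * Real.log (condYX p y x)) := by
        rw [condYX]
        field_simp
    _ ≤ margX p x * (condYX p y x * Real.log (condYX p y x / q y x)) := by
        gcongr margX p x * (condYX p y x * ?_)
        exact Real.log_le_log_div hc (condYX_le_one hpos y x) (hq₀ y x) (hq₁ y x)

lemma sum_margY_mul_dependenceRatio_pushPmf [Nonempty Y] {p : X × Y → ℝ}
    (hpos : ∀ xy, 0 < p xy) (e : X → A) (f : Y → B) (x : X) :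
    ∑ y, margY p y * dependenceRatio (pushPmf p e f) (e x, f y) = 1 := by
  have hP := pushPmf_nonneg (fun xy => (hpos xy).le) e f
  obtain ⟨y⟩ := ‹Nonempty Y›
  have hx : 0 < margX (pushPmf p e f) (e x) :=
    (hpos (x, y)).trans_le <| (le_pushPmf (fun xy => (hpos xy).le) e f x y).trans (le_margX hP _ _)
  rw [← sum_margY_pushPmf_mul p e f fun b => dependenceRatio (pushPmf p e f) (e x, b)]
  exact sum_margY_mul_dependenceRatio hP hx.ne'

lemma predLoss_qModel_margY_dependenceRatio [Nonempty Y] {p : X × Y → ℝ}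
    (hpos : ∀ xy, 0 < p xy) (e : X → A) (f : Y → B) :
    predLoss p (qModel e f (margY p) (dependenceRatio (pushPmf p e f)))
      = mutualInfo p - mutualInfo (pushPmf p e f) := by
  have hp : ∀ xy, 0 ≤ p xy := fun xy => (hpos xy).le
  have hq : qModel e f (margY p) (dependenceRatio (pushPmf p e f))
      = fun y x => margY p y * dependenceRatio (pushPmf p e f) (e x, f y) := by
    ext y x
    rw [qModel, sum_margY_mul_dependenceRatio_pushPmf hpos, div_one]
  rw [hq, predLoss_margY_mul hpos _ fun y x =>
      dependenceRatio_pos (pushPmf_nonneg hp e f) ((hpos _).trans_le (le_pushPmf hp e f x y))]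
  congr 1
  exact (sum_pushPmf_mul p e f fun ab => Real.log (dependenceRatio (pushPmf p e f) ab)).symm

theorem predictive_suboptimality_le_mutual_information_gap_general
    [Nonempty Y] (p : X × Y → ℝ) (hpos : ∀ xy, 0 < p xy)
    (e : X → A) (f : Y → B) :
    sInf {ℓ : ℝ | ∃ ψ1 : Y → ℝ, ∃ ψ2 : A × B → ℝ,
        (∀ y, 0 ≤ ψ1 y) ∧ (∀ ab, 0 ≤ ψ2 ab) ∧
        (∀ x, 0 < ∑ y', ψ1 y' * ψ2 (e x, f y')) ∧
        ℓ = predLoss p (qModel e f ψ1 ψ2)}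
      ≤ mutualInfo p - mutualInfo (pushPmf p e f) ∧
    ∃ ψ1 : Y → ℝ, ∃ ψ2 : A × B → ℝ,
        (∀ y, 0 ≤ ψ1 y) ∧ (∀ ab, 0 ≤ ψ2 ab) ∧
        (∀ x, 0 < ∑ y', ψ1 y' * ψ2 (e x, f y')) ∧
        predLoss p (qModel e f ψ1 ψ2) = mutualInfo p - mutualInfo (pushPmf p e f) := by
  have hp : ∀ xy, 0 ≤ p xy := fun xy => (hpos xy).le
  have hψ1 : ∀ y, 0 ≤ margY p y := margY_nonneg hp
  have hψ2 := dependenceRatio_nonneg (pushPmf_nonneg hp e f)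
  have hZ : ∀ x, 0 < ∑ y', margY p y' * dependenceRatio (pushPmf p e f) (e x, f y') := fun x =>
    (sum_margY_mul_dependenceRatio_pushPmf hpos e f x).symm ▸ one_pos
  have hloss := predLoss_qModel_margY_dependenceRatio hpos e f
  refine ⟨csInf_le ⟨∑ x, ∑ y, p (x, y) * Real.log (condYX p y x), ?_⟩
    ⟨_, _, hψ1, hψ2, hZ, hloss.symm⟩, _, _, hψ1, hψ2, hZ, hloss⟩
  rintro _ ⟨φ1, φ2, hφ1, hφ2, -, rfl⟩
  exact sum_mul_log_condYX_le_predLoss hpos _ (qModel_nonneg hφ1 hφ2) (qModel_le_one hφ1 hφ2)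

theorem predictive_suboptimality_le_mutual_information_gap
    [Nonempty X] [Nonempty Y] [Nonempty A] [Nonempty B]
    (p : X × Y → ℝ) (hpos : ∀ xy, 0 < p xy) (hsum : ∑ xy, p xy = 1)
    (e : X → A) (f : Y → B) :
    sInf {ℓ : ℝ | ∃ ψ1 : Y → ℝ, ∃ ψ2 : A × B → ℝ,
        (∀ y, 0 ≤ ψ1 y) ∧ (∀ ab, 0 ≤ ψ2 ab) ∧
        (∀ x, 0 < ∑ y', ψ1 y' * ψ2 (e x, f y')) ∧
        ℓ = predLoss p (qModel e f ψ1 ψ2)}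
      ≤ mutualInfo p - mutualInfo (pushPmf p e f) ∧
    ∃ ψ1 : Y → ℝ, ∃ ψ2 : A × B → ℝ,
        (∀ y, 0 ≤ ψ1 y) ∧ (∀ ab, 0 ≤ ψ2 ab) ∧
        (∀ x, 0 < ∑ y', ψ1 y' * ψ2 (e x, f y')) ∧
        predLoss p (qModel e f ψ1 ψ2) = mutualInfo p - mutualInfo (pushPmf p e f) :=
  predictive_suboptimality_le_mutual_information_gap_general p hpos e f
end
end

section
/- Let X, U, Z be measurable spaces, and let P be a Markov kernel from X × U to X, Enc a Markov kernel from X to Z, and F a Markov kernel from Z × U to Z. Fix x ∈ X and u₀, u₁ ∈ U. Define the probability measures on Z: μ₂ = (P(x,u₀)).bind( x₁ ↦ (P(x₁,u₁)).bind( x₂ ↦ Enc(x₂) ) ) (encode after two steps of the true dynamics) and ν₂ = ((Enc(x)).bind( z₀ ↦ F(z₀,u₀) )).bind( z₁ ↦ F(z₁,u₁) ) (two steps of the latent dynamics after encoding). Then, assuming the map x₁ ↦ tv( (P(x₁,u₁)).bind(Enc), (Enc(x₁)).bind( z ↦ F(z,u₁) ) ) is measurable, tv(μ₂, ν₂) ≤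 tv( (P(x,u₀)).bind(Enc), (Enc(x)).bind( z ↦ F(z,u₀) ) ) + ∫ tv( (P(x₁,u₁)).bind(Enc), (Enc(x₁)).bind( z ↦ F(z,u₁) ) ) d(P(x,u₀))(x₁). -/
/-!
Compare both measures with the hybrid `P(x,u₀).bind (x₁ ↦ Enc(x₁).bind F(·,u₁))`.
Against `μ₂` the hybrid is the `P(x,u₀)`-mixture of the one-step discrepancies at time 1, and
total variation is convex under mixing; against `ν₂` both measures are pushed through the same
kernel `F(·,u₁)`, which cannot increase total variation (data processing), leaving the
one-step discrepancy at time 0.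
-/

open MeasureTheory ProbabilityTheory

/-- Total variation distance between two measures:
`sup` over measurable sets `s` of `|μ s − ν s|`. -/
noncomputable def tv {α : Type*} [MeasurableSpace α] (μ ν : Measure α) : ℝ :=
  ⨆ s : {s : Set α // MeasurableSet s}, |(μ s).toReal - (ν s).toReal|

section TotalVariation

variable {α β : Type*} [MeasurableSpace α] [MeasurableSpace β]

lemma abs_measureReal_sub_le_tv (μ ν : Measure α) [IsFiniteMeasure μ] [IsFiniteMeasure ν]
    {s : Set α} (hs : MeasurableSet s) : |μ.real s - ν.real s| ≤ tv μ ν := by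
  refine le_ciSup (f := fun s : {s : Set α // MeasurableSet s} => |μ.real s - ν.real s|)
    ⟨μ.real Set.univ + ν.real Set.univ, ?_⟩ ⟨s, hs⟩
  rintro _ ⟨t, rfl⟩
  exact (abs_sub _ _).trans <| by
    simp only [abs_of_nonneg measureReal_nonneg]
    exact add_le_add (measureReal_mono (Set.subset_univ _))
      (measureReal_mono (Set.subset_univ _))

lemma tv_le_of_forall {μ ν : Measure α} {c : ℝ}
    (h : ∀ s, MeasurableSet s → |μ.real s - ν.real s| ≤ c) : tv μ ν ≤ c :=
  have : Nonempty {s : Set α // MeasurableSet s} := ⟨⟨∅, .empty⟩⟩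
  ciSup_le fun s => h s s.2

lemma tv_nonneg (μ ν : Measure α) [IsFiniteMeasure μ] [IsFiniteMeasure ν] : 0 ≤ tv μ ν :=
  (abs_nonneg _).trans (abs_measureReal_sub_le_tv μ ν .empty)

lemma tv_le_one (μ ν : Measure α) [IsProbabilityMeasure μ] [IsProbabilityMeasure ν] :
    tv μ ν ≤ 1 :=
  tv_le_of_forall fun _ _ =>
    abs_sub_le_of_nonneg_of_le measureReal_nonneg measureReal_le_one
      measureReal_nonneg measureReal_le_one

lemma tv_comm (μ ν : Measure α) : tv μ ν = tv ν μ := by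
  simp only [tv, abs_sub_comm]

lemma tv_triangle (μ ξ ν : Measure α) [IsFiniteMeasure μ] [IsFiniteMeasure ξ]
    [IsFiniteMeasure ν] : tv μ ν ≤ tv μ ξ + tv ξ ν :=
  tv_le_of_forall fun _ hs => (abs_sub_le _ _ _).trans <|
    add_le_add (abs_measureReal_sub_le_tv μ ξ hs) (abs_measureReal_sub_le_tv ξ ν hs)

/-- Hahn decomposition: `μ ≥ ν` on `d` and `μ ≤ ν` off `d`, so the integrals of `g` differ by
at most `μ d - ν d`. -/
lemma integral_sub_integral_le_tv (μ ν : Measure α) [IsFiniteMeasure μ] [IsFiniteMeasure ν]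
    {g : α → ℝ} (hg : Measurable g) (hg₀ : ∀ a, 0 ≤ g a) (hg₁ : ∀ a, g a ≤ 1) :
    ∫ a, g a ∂μ - ∫ a, g a ∂ν ≤ tv μ ν := by
  obtain ⟨d, hd, hμν, hνμ⟩ := hahn_decomposition μ ν
  have hint : ∀ (ρ : Measure α) [IsFiniteMeasure ρ], Integrable g ρ := fun ρ _ =>
    .of_bound hg.aestronglyMeasurable 1 <| ae_of_all _ fun a => by
      rw [Real.norm_eq_abs, abs_of_nonneg (hg₀ a)]; exact hg₁ a
  have hsplit : ∀ (ρ : Measure α) [IsFiniteMeasure ρ],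
      ∫ a, g a ∂ρ = ∫ a in d, g a ∂ρ + ∫ a in dᶜ, g a ∂ρ := fun ρ _ =>
    (integral_add_compl hd (hint ρ)).symm
  have hcompl : ∫ a in dᶜ, g a ∂μ ≤ ∫ a in dᶜ, g a ∂ν := by
    refine integral_mono_measure ?_ (ae_of_all _ hg₀) (hint ν).restrict
    refine Measure.le_iff.2 fun t ht => ?_
    rw [Measure.restrict_apply ht, Measure.restrict_apply ht]
    exact hνμ _ (ht.inter hd.compl) Set.inter_subset_right
  have hone_sub : ∫ a in d, (1 - g a) ∂ν ≤ ∫ a in d, (1 - g a) ∂μ := by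
    refine integral_mono_measure ?_ (ae_of_all _ fun a => sub_nonneg.2 (hg₁ a))
      ((integrable_const 1).sub (hint μ)).restrict
    refine Measure.le_iff.2 fun t ht => ?_
    rw [Measure.restrict_apply ht, Measure.restrict_apply ht]
    exact hμν _ (ht.inter hd) Set.inter_subset_right
  have hone_sub_eq : ∀ (ρ : Measure α) [IsFiniteMeasure ρ],
      ∫ a in d, (1 - g a) ∂ρ = ρ.real d - ∫ a in d, g a ∂ρ := fun ρ _ => by
    rw [integral_sub (integrable_const 1) (hint ρ).restrict]
    simp
  have hd_le := (le_abs_self _).trans (abs_measureReal_sub_le_tv μ ν hd)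
  rw [hone_sub_eq, hone_sub_eq] at hone_sub
  linarith [hsplit μ, hsplit ν]

lemma abs_integral_sub_integral_le_tv (μ ν : Measure α) [IsFiniteMeasure μ]
    [IsFiniteMeasure ν] {g : α → ℝ} (hg : Measurable g) (hg₀ : ∀ a, 0 ≤ g a)
    (hg₁ : ∀ a, g a ≤ 1) : |∫ a, g a ∂μ - ∫ a, g a ∂ν| ≤ tv μ ν :=
  abs_sub_le_iff.2 ⟨integral_sub_integral_le_tv μ ν hg hg₀ hg₁,
    tv_comm μ ν ▸ integral_sub_integral_le_tv ν μ hg hg₀ hg₁⟩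

lemma measureReal_comp_apply (μ : Measure α) (κ : Kernel α β) [IsFiniteKernel κ]
    {s : Set β} (hs : MeasurableSet s) : (κ ∘ₘ μ).real s = ∫ a, (κ a).real s ∂μ := by
  rw [measureReal_def, Measure.bind_apply hs κ.aemeasurable]
  exact (integral_toReal (κ.measurable_coe hs).aemeasurable
    (ae_of_all _ fun _ => measure_lt_top _ _)).symm

lemma tv_comp_le (μ ν : Measure α) [IsFiniteMeasure μ] [IsFiniteMeasure ν]
    (κ : Kernel α β) [IsMarkovKernel κ] : tv (κ ∘ₘ μ) (κ ∘ₘ ν) ≤ tv μ ν :=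
  tv_le_of_forall fun s hs => by
    rw [measureReal_comp_apply μ κ hs, measureReal_comp_apply ν κ hs]
    exact abs_integral_sub_integral_le_tv μ ν (κ.measurable_coe hs).ennreal_toReal
      (fun _ => measureReal_nonneg) (fun _ => measureReal_le_one)

lemma tv_comp_comp_le_integral (μ : Measure α) [IsFiniteMeasure μ]
    (κ η : Kernel α β) [IsMarkovKernel κ] [IsMarkovKernel η]
    (hmeas : Measurable fun a => tv (κ a) (η a)) :
    tv (κ ∘ₘ μ) (η ∘ₘ μ) ≤ ∫ a, tv (κ a) (η a) ∂μ :=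
  tv_le_of_forall fun s hs => by
    have hκ := Kernel.IsMarkovKernel.integrable μ κ hs
    have hη := Kernel.IsMarkovKernel.integrable μ η hs
    have htv : Integrable (fun a => tv (κ a) (η a)) μ :=
      .of_bound hmeas.aestronglyMeasurable 1 <| ae_of_all _ fun a => by
        rw [Real.norm_eq_abs, abs_of_nonneg (tv_nonneg _ _)]; exact tv_le_one _ _
    calc |(κ ∘ₘ μ).real s - (η ∘ₘ μ).real s|
        = |∫ a, ((κ a).real s - (η a).real s) ∂μ| := by
          rw [measureReal_comp_apply μ κ hs, measureReal_comp_apply μ η hs,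
            integral_sub hκ hη]
      _ ≤ ∫ a, |(κ a).real s - (η a).real s| ∂μ := abs_integral_le_integral_abs
      _ ≤ ∫ a, tv (κ a) (η a) ∂μ :=
          integral_mono (hκ.sub hη).abs htv fun a => abs_measureReal_sub_le_tv _ _ hs

end TotalVariation

theorem two_step_tv_consistency_bound
    {X U Z : Type*} [MeasurableSpace X] [MeasurableSpace U] [MeasurableSpace Z]
    (P : Kernel (X × U) X) [IsMarkovKernel P]
    (Enc : Kernel X Z) [IsMarkovKernel Enc]
    (F : Kernel (Z × U) Z) [IsMarkovKernel F]
    (x : X) (u₀ u₁ : U)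
    (hmeas : Measurable fun x₁ =>
      tv ((P (x₁, u₁)).bind fun x₂ => Enc x₂) ((Enc x₁).bind fun z => F (z, u₁))) :
    tv ((P (x, u₀)).bind fun x₁ => (P (x₁, u₁)).bind fun x₂ => Enc x₂)
        (((Enc x).bind fun z₀ => F (z₀, u₀)).bind fun z₁ => F (z₁, u₁))
      ≤ tv ((P (x, u₀)).bind fun x₁ => Enc x₁) ((Enc x).bind fun z => F (z, u₀))
        + ∫ x₁, tv ((P (x₁, u₁)).bind fun x₂ => Enc x₂)
            ((Enc x₁).bind fun z => F (z, u₁)) ∂(P (x, u₀)) := by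
  -- The measures in the statement are these kernel compositions up to definitional unfolding.
  let P₁ : Kernel X X := P.comap (·, u₁) (by fun_prop)
  let F₀ : Kernel Z Z := F.comap (·, u₀) (by fun_prop)
  let F₁ : Kernel Z Z := F.comap (·, u₁) (by fun_prop)
  have hfirst : tv ((Enc ∘ₖ P₁) ∘ₘ P (x, u₀)) ((F₁ ∘ₖ Enc) ∘ₘ P (x, u₀))
      ≤ ∫ x₁, tv ((Enc ∘ₖ P₁) x₁) ((F₁ ∘ₖ Enc) x₁) ∂(P (x, u₀)) :=
    tv_comp_comp_le_integral _ _ _ hmeas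
  have hsecond : tv ((F₁ ∘ₖ Enc) ∘ₘ P (x, u₀)) (F₁ ∘ₘ (F₀ ∘ₘ Enc x))
      ≤ tv (Enc ∘ₘ P (x, u₀)) (F₀ ∘ₘ Enc x) := by
    rw [← Measure.comp_assoc]
    exact tv_comp_le _ _ F₁
  calc _ ≤ tv ((Enc ∘ₖ P₁) ∘ₘ P (x, u₀)) ((F₁ ∘ₖ Enc) ∘ₘ P (x, u₀))
          + tv ((F₁ ∘ₖ Enc) ∘ₘ P (x, u₀)) (F₁ ∘ₘ (F₀ ∘ₘ Enc x)) := tv_triangle _ _ _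
    _ ≤ _ := add_le_add hfirst hsecond
    _ = _ := add_comm _ _
end
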